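/- Let X ⊆ ℝ^d be a nonempty open bounded set and η > 0, and let (X_j)_{j≥1} be i.i.d. random points uniformly distributed on X. Then there exist constants a, b > 0 such that for every i ≥ 1, the probability that some point of X has no sample within distance η among the first i samples satisfies P(∃ x ∈ X, ∀ j ≤ i, ‖X_j − x‖ > η) ≤ a e^{−b i}. -/

import Mathlib

/-!
Cover `X` by finitely many balls of radius `η / 2` centred in `X`. If some point of `X` is
farther than `η` from every sample, then every sample misses the ball of the net containing
that point. Each such ball has positive uniform measure `p`, so by independence all of the
first `i` samples miss it with probability `(1 - p) ^ i`, and a union bound over the finite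
net gives a geometric, hence exponential, bound.
-/

open MeasureTheory ProbabilityTheory Metric

/-- The uniform probability measure on a set `X` of positive finite volume. -/
noncomputable def uniformOnSet (d : ℕ) (X : Set (EuclideanSpace ℝ (Fin d))) :
    Measure (EuclideanSpace ℝ (Fin d)) :=
  (volume X)⁻¹ • volume.restrict X

lemma uniformOnSet_eq_cond (d : ℕ) (X : Set (EuclideanSpace ℝ (Fin d))) :
    uniformOnSet d X = volume[|X] :=
  rfl

lemma isProbabilityMeasure_uniformOnSet {d : ℕ} {X : Set (EuclideanSpace ℝ (Fin d))}
    (hXne : X.Nonempty) (hXopen : IsOpen X) (hXbdd : Bornology.IsBounded X) :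
    IsProbabilityMeasure (uniformOnSet d X) :=
  cond_isProbabilityMeasure_of_finite (hXopen.measure_pos volume hXne).ne'
    hXbdd.measure_lt_top.ne

lemma uniformOnSet_ball_pos {d : ℕ} {X : Set (EuclideanSpace ℝ (Fin d))}
    (hXopen : IsOpen X) (hXbdd : Bornology.IsBounded X) {x : EuclideanSpace ℝ (Fin d)}
    (hx : x ∈ X) {ε : ℝ} (hε : 0 < ε) : 0 < uniformOnSet d X (ball x ε) := by
  rw [uniformOnSet_eq_cond, cond_apply hXopen.measurableSet]
  exact ENNReal.mul_pos (ENNReal.inv_ne_zero.mpr hXbdd.measure_lt_top.ne)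
    ((hXopen.inter isOpen_ball).measure_pos volume ⟨x, hx, mem_ball_self hε⟩).ne'

lemma ENNReal.exists_exp_bound_of_lt_one {m : ENNReal} (hm : m < 1) (K : ℕ) :
    ∃ a b : ℝ, 0 < a ∧ 0 < b ∧ ∀ n : ℕ,
      K * m ^ n ≤ ENNReal.ofReal (a * Real.exp (-b * n)) := by
  obtain ⟨r, hr0, hmr, hr1⟩ := ENNReal.lt_iff_exists_real_btwn.mp hm
  have hr_pos : 0 < r := ENNReal.ofReal_pos.mp (hmr.trans_le' bot_le)
  have hr_lt_one : r < 1 := by simpa using hr1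
  refine ⟨K + 1, -Real.log r, by positivity, neg_pos.mpr (Real.log_neg hr_pos hr_lt_one),
    fun n => ?_⟩
  have hexp : Real.exp (-(-Real.log r) * n) = r ^ n := by
    rw [neg_neg, mul_comm, Real.exp_nat_mul, Real.exp_log hr_pos]
  calc (K : ENNReal) * m ^ n ≤ K * ENNReal.ofReal r ^ n := by gcongr
    _ = ENNReal.ofReal (K * r ^ n) := by
      rw [ENNReal.ofReal_mul (Nat.cast_nonneg K), ENNReal.ofReal_pow hr0, ENNReal.ofReal_natCast]
    _ ≤ ENNReal.ofReal ((K + 1) * Real.exp (-(-Real.log r) * n)) := by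
      rw [hexp]
      gcongr
      linarith

lemma exists_finite_net_forall_dist_lt {E : Type*} [PseudoMetricSpace E] {X : Set E}
    (hX : TotallyBounded X) {η : ℝ} (hη : 0 < η) : ∃ t : Finset E, (∀ c ∈ t, c ∈ X) ∧
      ∀ x ∈ X, ∃ c ∈ t, ∀ y, η < dist y x → y ∉ ball c (η / 2) := by
  obtain ⟨t, htX, htfin, hcover⟩ := finite_approx_of_totallyBounded hX (η / 2) (by positivity)
  refine ⟨htfin.toFinset, fun c hc => htX (htfin.mem_toFinset.mp hc), fun x hx => ?_⟩
  obtain ⟨c, hct, hxc⟩ := Set.mem_iUnion₂.mp (hcover hx)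
  refine ⟨c, htfin.mem_toFinset.mpr hct, fun y hxy hyc => ?_⟩
  have := dist_triangle y c x
  rw [mem_ball] at hxc hyc
  linarith [dist_comm x c]

section Sampling

variable {Ω E ι : Type*} {mΩ : MeasurableSpace Ω} [MeasurableSpace E] {P : Measure Ω}
  {μ : Measure E} {Y : ι → Ω → E}

lemma ProbabilityTheory.iIndepFun.measure_iInter_preimage_eq_pow (hindep : iIndepFun Y P)
    (hmeas : ∀ j, Measurable (Y j)) (hlaw : ∀ j, P.map (Y j) = μ) (s : Finset ι) {A : Set E}
    (hA : MeasurableSet A) : P (⋂ j ∈ s, Y j ⁻¹' A) = μ A ^ s.card := by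
  rw [hindep.measure_inter_preimage_eq_mul s (sets := fun _ => A) (fun _ _ => hA),
    ← Finset.prod_const]
  refine Finset.prod_congr rfl fun j _ => ?_
  rw [← Measure.map_apply (hmeas j) hA, hlaw j]

variable [PseudoMetricSpace E] [OpensMeasurableSpace E] [IsProbabilityMeasure μ]

lemma ProbabilityTheory.iIndepFun.exists_exp_bound_measure_uncovered (hindep : iIndepFun Y P)
    (hmeas : ∀ j, Measurable (Y j)) (hlaw : ∀ j, P.map (Y j) = μ) {X : Set E}
    (hX : TotallyBounded X) (hpos : ∀ x ∈ X, ∀ ε > 0, 0 < μ (ball x ε)) {η : ℝ} (hη : 0 < η) :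
    ∃ a b : ℝ, 0 < a ∧ 0 < b ∧ ∀ s : Finset ι,
      P {ω | ∃ x ∈ X, ∀ j ∈ s, η < dist (Y j ω) x} ≤
        ENNReal.ofReal (a * Real.exp (-b * s.card)) := by
  obtain ⟨t, htX, hnet⟩ := exists_finite_net_forall_dist_lt hX hη
  set m := t.sup fun c => 1 - μ (ball c (η / 2))
  have hm : m < 1 := (Finset.sup_lt_iff zero_lt_one).mpr fun c hc =>
    ENNReal.sub_lt_self ENNReal.one_ne_top one_ne_zero (hpos c (htX c hc) _ (by positivity)).ne'
  obtain ⟨a, b, ha, hb, hbound⟩ := ENNReal.exists_exp_bound_of_lt_one hm t.card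
  refine ⟨a, b, ha, hb, fun s => ?_⟩
  have hsub : {ω | ∃ x ∈ X, ∀ j ∈ s, η < dist (Y j ω) x} ⊆
      ⋃ c ∈ t, ⋂ j ∈ s, Y j ⁻¹' (ball c (η / 2))ᶜ := by
    rintro ω ⟨x, hx, hfar⟩
    obtain ⟨c, hct, hc⟩ := hnet x hx
    exact Set.mem_biUnion hct (Set.mem_iInter₂.mpr fun j hj => hc _ (hfar j hj))
  calc P {ω | ∃ x ∈ X, ∀ j ∈ s, η < dist (Y j ω) x}
      ≤ ∑ c ∈ t, P (⋂ j ∈ s, Y j ⁻¹' (ball c (η / 2))ᶜ) :=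
        (measure_mono hsub).trans (measure_biUnion_finset_le t _)
    _ = ∑ c ∈ t, (1 - μ (ball c (η / 2))) ^ s.card := Finset.sum_congr rfl fun c _ => by
        rw [hindep.measure_iInter_preimage_eq_pow hmeas hlaw s measurableSet_ball.compl,
          prob_compl_eq_one_sub measurableSet_ball]
    _ ≤ ∑ _c ∈ t, m ^ s.card := Finset.sum_le_sum fun c hc => by
        gcongr
        exact Finset.le_sup (f := fun c => 1 - μ (ball c (η / 2))) hc
    _ = t.card * m ^ s.card := by rw [Finset.sum_const, nsmul_eq_mul]
    _ ≤ ENNReal.ofReal (a * Real.exp (-b * s.card)) := hbound _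

end Sampling

theorem exponential_coverage_general (d : ℕ)
    (X : Set (EuclideanSpace ℝ (Fin d))) (hXne : X.Nonempty)
    (hXopen : IsOpen X) (hXbdd : Bornology.IsBounded X)
    (η : ℝ) (hη : 0 < η)
    (Ω : Type) (mΩ : MeasurableSpace Ω) (P : Measure Ω)
    (Y : ℕ → Ω → EuclideanSpace ℝ (Fin d))
    (hmeas : ∀ j, Measurable (Y j))
    (hindep : iIndepFun Y P)
    (hlaw : ∀ j, Measure.map (Y j) P = uniformOnSet d X) :
    ∃ a b : ℝ, 0 < a ∧ 0 < b ∧ ∀ i : ℕ, 1 ≤ i →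
      P {ω | ∃ x ∈ X, ∀ j : ℕ, 1 ≤ j → j ≤ i → η < ‖Y j ω - x‖} ≤
        ENNReal.ofReal (a * Real.exp (-b * i)) := by
  have := isProbabilityMeasure_uniformOnSet hXne hXopen hXbdd
  have hX : TotallyBounded X := hXbdd.isCompact_closure.totallyBounded.subset subset_closure
  obtain ⟨a, b, ha, hb, hbound⟩ := hindep.exists_exp_bound_measure_uncovered hmeas hlaw hX
    (fun x hx ε hε => uniformOnSet_ball_pos hXopen hXbdd hx hε) hη
  refine ⟨a, b, ha, hb, fun i _ => ?_⟩
  convert hbound (Finset.Icc 1 i) using 4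
  · simp only [Finset.mem_Icc, and_imp, dist_eq_norm]
  · simp

/-- Exponential coverage: for i.i.d. uniform samples on a nonempty open bounded set `X`,
the probability that some point of `X` has no sample within distance `η` among the first
`i` samples decays exponentially in `i`. -/
theorem exponential_coverage (d : ℕ)
    (X : Set (EuclideanSpace ℝ (Fin d))) (hXne : X.Nonempty)
    (hXopen : IsOpen X) (hXbdd : Bornology.IsBounded X)
    (η : ℝ) (hη : 0 < η)
    (Ω : Type) (mΩ : MeasurableSpace Ω) (P : Measure Ω) (hP : IsProbabilityMeasure P)
    (Y : ℕ → Ω → EuclideanSpace ℝ (Fin d))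
    (hmeas : ∀ j, Measurable (Y j))
    (hindep : iIndepFun Y P)
    (hlaw : ∀ j, Measure.map (Y j) P = uniformOnSet d X) :
    ∃ a b : ℝ, 0 < a ∧ 0 < b ∧ ∀ i : ℕ, 1 ≤ i →
      P {ω | ∃ x ∈ X, ∀ j : ℕ, 1 ≤ j → j ≤ i → η < ‖Y j ω - x‖} ≤
        ENNReal.ofReal (a * Real.exp (-b * i)) :=
  exponential_coverage_general d X hXne hXopen hXbdd η hη Ω mΩ P Y hmeas hindep hlaw
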